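/- arXiv:1806.04492 — 2 statements merged into one kernel-verified Lean document; each statement's English description precedes it below -/
import Mathlib

section
/- For every natural number n, the 2^n closed intervals Set.Icc (1 + (s k)/3^n) (1 + (s k + 1)/3^n), for 0 ≤ k ≤ 2^n − 1, are pairwise disjoint; indeed for all k < l < 2^n one has s k + 1 < s l. -/
/-! Consecutive values of `s` differ by at least `2`: passing from `2j` to `2j + 1` adds `2`,
and passing from `2j + 1` to `2j + 2` triples the gap between `s j` and `s (j + 1)` and then
subtracts `2`. Since `s` is then increasing, `s k + 1 < s l` for all `k < l`, so the intervals of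
length `3⁻ⁿ` starting at `1 + s k / 3ⁿ` are pairwise disjoint. -/

noncomputable section

/-- `s k = Σᵢ 2·tᵢ·3ⁱ` where `k = Σᵢ tᵢ·2ⁱ` is the binary expansion of `k`;
equivalently `s 0 = 0`, `s (2j) = 3·(s j)`, `s (2j+1) = 3·(s j) + 2`. -/
def s : ℕ → ℕ
  | 0 => 0
  | k + 1 =>
    if (k + 1) % 2 = 0 then 3 * s ((k + 1) / 2)
    else 3 * s ((k + 1) / 2) + 2
decreasing_by all_goals (simp_wf; omega)

lemma s_two_mul (j : ℕ) : s (2 * j) = 3 * s j := by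
  cases j with
  | zero => simp [s]
  | succ m =>
    rw [show 2 * (m + 1) = (2 * m + 1) + 1 by ring, s]
    simp [show (2 * m + 1 + 1) % 2 = 0 by omega, show (2 * m + 1 + 1) / 2 = m + 1 by omega]

lemma s_two_mul_add_one (j : ℕ) : s (2 * j + 1) = 3 * s j + 2 := by
  rw [s]
  simp [show (2 * j + 1) / 2 = j by omega]

lemma s_add_two_le_s_succ (k : ℕ) : s k + 2 ≤ s (k + 1) := by
  induction k using Nat.strong_induction_on with
  | _ k ih =>
    obtain ⟨j, rfl | rfl⟩ := Nat.even_or_odd' k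
    · rw [s_two_mul, s_two_mul_add_one]
    · rw [show 2 * j + 1 + 1 = 2 * (j + 1) by ring, s_two_mul_add_one, s_two_mul]
      have := ih j (by omega)
      omega

lemma s_monotone : Monotone s :=
  monotone_nat_of_le_succ fun k => by linarith [s_add_two_le_s_succ k]

lemma s_add_one_lt_of_lt {k l : ℕ} (hkl : k < l) : s k + 1 < s l :=
  calc s k + 1 < s (k + 1) := by linarith [s_add_two_le_s_succ k]
    _ ≤ s l := s_monotone hkl

lemma disjoint_Icc_div_of_add_one_lt {a b c : ℝ} (hc : 0 < c) (hab : a + 1 < b) :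
    Disjoint (Set.Icc (1 + a / c) (1 + (a + 1) / c)) (Set.Icc (1 + b / c) (1 + (b + 1) / c)) := by
  have : (a + 1) / c < b / c := by gcongr
  exact Set.disjoint_left.mpr fun x ⟨_, hxa⟩ ⟨hxb, _⟩ => by linarith

/-- For each `n`, the `2^n` closed intervals `[1 + s k / 3^n, 1 + (s k + 1)/3^n]`,
`0 ≤ k ≤ 2^n − 1`, are pairwise disjoint; indeed `s k + 1 < s l` whenever `k < l < 2^n`. -/
theorem stmt_1 (n : ℕ) :
    (∀ k l : ℕ, k < l → l < 2 ^ n → s k + 1 < s l) ∧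
    (∀ k l : ℕ, k < 2 ^ n → l < 2 ^ n → k ≠ l →
      Disjoint (Set.Icc (1 + (s k : ℝ) / 3 ^ n) (1 + ((s k : ℝ) + 1) / 3 ^ n))
        (Set.Icc (1 + (s l : ℝ) / 3 ^ n) (1 + ((s l : ℝ) + 1) / 3 ^ n))) := by
  have disjoint_of_lt {k l : ℕ} (hkl : k < l) :
      Disjoint (Set.Icc (1 + (s k : ℝ) / 3 ^ n) (1 + ((s k : ℝ) + 1) / 3 ^ n))
        (Set.Icc (1 + (s l : ℝ) / 3 ^ n) (1 + ((s l : ℝ) + 1) / 3 ^ n)) :=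
    disjoint_Icc_div_of_add_one_lt (by positivity) (by exact_mod_cast s_add_one_lt_of_lt hkl)
  refine ⟨fun k l hkl _ => s_add_one_lt_of_lt hkl, fun k l _ _ hkl => ?_⟩
  rcases hkl.lt_or_gt with hkl | hlk
  · exact disjoint_of_lt hkl
  · exact (disjoint_of_lt hlk).symm
end
end

section
/- The closed real intervals Set.Icc (ε·α(n,k) − r(n)) (ε·α(n,k) + r(n)), for ε ∈ {1, −1}, n ≥ 1 and 0 ≤ k ≤ 2^(n−1)−1, are pairwise disjoint: any two such intervals with distinct parameter triples (ε,n,k) have empty intersection. -/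
noncomputable section

/-- The midpoint of the middle third removed at stage `n` from the `k`-th interval of
stage `n−1` of the middle-thirds construction on `[1,2]`. -/
def alphaC (n k : ℕ) : ℝ := 1 + (3 * s k + 1) / 3 ^ n + 1 / (2 * 3 ^ n)

/-- The common radius of the half-circles at stage `n`. -/
def radC (n : ℕ) : ℝ := 1 / (4 * 3 ^ n)

/-!
The affine map `y ↦ (y - 1) 3ⁿ` sends the interval with parameters `(n, k)` into the open
unit interval `(3 s k + 1, 3 s k + 2)`; at the finer stage `n + d` the coarser interval lands in
`((3 s k + 1) 3^d, (3 s k + 2) 3^d)`. If the two meet, `3 s k₂ + 1` has `3 s k₁ + 1` as its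
leading ternary digits. For `d = 0` this forces `s k₁ = s k₂`, hence `k₁ = k₂`; for `d > 0` it puts
a ternary digit `1` into `s k₂`, whose digits are all `0` or `2`. Intervals with `ε = 1` and
`ε = -1` are separated by `0`.
-/

lemma s_eq_three_mul_add (k : ℕ) : s k = 3 * s (k / 2) + 2 * (k % 2) := by
  cases k with
  | zero => simp [s]
  | succ m =>
    rw [s]
    rcases Nat.mod_two_eq_zero_or_one (m + 1) with h | h <;> simp [h]

lemma s_div_three (k : ℕ) : s k / 3 = s (k / 2) := by
  have := s_eq_three_mul_add k
  omega

lemma s_div_pow_mod_three_ne_one (j k : ℕ) : s k / 3 ^ j % 3 ≠ 1 := by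
  induction j generalizing k with
  | zero =>
    have := s_eq_three_mul_add k
    simp only [pow_zero, Nat.div_one]
    omega
  | succ j ih =>
    rw [pow_succ', ← Nat.div_div_eq_div_mul, s_div_three]
    exact ih (k / 2)

lemma s_strictMono : StrictMono s := by
  suffices H : ∀ m, ∀ k < m, s k < s m from fun k m hkm => H m k hkm
  intro m
  induction m using Nat.strong_induction_on with
  | _ m ih =>
    intro k hkm
    have hk := s_eq_three_mul_add k
    have hm := s_eq_three_mul_add m
    rcases Nat.lt_or_ge (k / 2) (m / 2) with h | h
    · have := ih (m / 2) (by omega) (k / 2) h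
      omega
    · have hkm' : k / 2 = m / 2 := by omega
      rw [hkm'] at hk
      omega

lemma Nat.div_eq_of_mem_Ioo_of_mem_Ioo {a b m : ℕ} {t : ℝ}
    (ht : t ∈ Set.Ioo ((a * b : ℕ) : ℝ) ((a + 1) * b : ℕ))
    (ht' : t ∈ Set.Ioo (m : ℝ) (m + 1)) : m / b = a := by
  have hlo : a * b < m + 1 := by exact_mod_cast ht.1.trans ht'.2
  have hhi : m < (a + 1) * b := by exact_mod_cast ht'.1.trans ht.2
  exact Nat.div_eq_of_lt_le (by omega) hhi

lemma radC_mul_pow (n : ℕ) : radC n * 3 ^ n = 1 / 4 := by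
  unfold radC
  field_simp

lemma alphaC_sub_one_mul_pow (n k : ℕ) : (alphaC n k - 1) * 3 ^ n = 3 * s k + 3 / 2 := by
  unfold alphaC
  field_simp
  ring

lemma radC_lt_alphaC (n k : ℕ) : radC n < alphaC n k := by
  have h3 : (1 : ℝ) ≤ 3 ^ n := one_le_pow₀ (by norm_num)
  have hr := radC_mul_pow n
  have hα := alphaC_sub_one_mul_pow n k
  have : (0 : ℝ) ≤ s k := Nat.cast_nonneg _
  nlinarith

lemma sub_one_mul_pow_mem_Ioo {n k : ℕ} {y : ℝ}
    (hy : y ∈ Set.Icc (alphaC n k - radC n) (alphaC n k + radC n)) :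
    (y - 1) * 3 ^ n ∈ Set.Ioo ((3 * s k + 1 : ℕ) : ℝ) ((3 * s k + 1 : ℕ) + 1) := by
  have hp : (0 : ℝ) < 3 ^ n := by positivity
  have hr := radC_mul_pow n
  have hα := alphaC_sub_one_mul_pow n k
  have hlo := mul_le_mul_of_nonneg_right hy.1 hp.le
  have hhi := mul_le_mul_of_nonneg_right hy.2 hp.le
  push_cast
  constructor <;> nlinarith

lemma eq_of_mem_Icc_of_mem_Icc_of_le {n₁ k₁ n₂ k₂ : ℕ} {y : ℝ} (hn : n₁ ≤ n₂)
    (hy₁ : y ∈ Set.Icc (alphaC n₁ k₁ - radC n₁) (alphaC n₁ k₁ + radC n₁))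
    (hy₂ : y ∈ Set.Icc (alphaC n₂ k₂ - radC n₂) (alphaC n₂ k₂ + radC n₂)) :
    n₁ = n₂ ∧ k₁ = k₂ := by
  obtain ⟨d, rfl⟩ := Nat.exists_eq_add_of_le hn
  have h₁ := sub_one_mul_pow_mem_Ioo hy₁
  have h₂ := sub_one_mul_pow_mem_Ioo hy₂
  have hd : (0 : ℝ) < 3 ^ d := by positivity
  have hcoarse : (y - 1) * 3 ^ (n₁ + d) ∈
      Set.Ioo (((3 * s k₁ + 1) * 3 ^ d : ℕ) : ℝ) ((3 * s k₁ + 1 + 1) * 3 ^ d : ℕ) := by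
    rw [pow_add, ← mul_assoc]
    push_cast at h₁ ⊢
    exact ⟨mul_lt_mul_of_pos_right h₁.1 hd, mul_lt_mul_of_pos_right h₁.2 hd⟩
  have hdiv := Nat.div_eq_of_mem_Ioo_of_mem_Ioo hcoarse h₂
  cases d with
  | zero =>
    refine ⟨rfl, s_strictMono.injective ?_⟩
    simp only [pow_zero, Nat.div_one] at hdiv
    omega
  | succ e =>
    have hdigit : (3 * s k₂ + 1) / 3 ^ (e + 1) = s k₂ / 3 ^ e := by
      rw [pow_succ', ← Nat.div_div_eq_div_mul]
      congr 1
      omega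
    have := s_div_pow_mod_three_ne_one e k₂
    omega

lemma eq_of_mem_Icc_of_mem_Icc {n₁ k₁ n₂ k₂ : ℕ} {y : ℝ}
    (hy₁ : y ∈ Set.Icc (alphaC n₁ k₁ - radC n₁) (alphaC n₁ k₁ + radC n₁))
    (hy₂ : y ∈ Set.Icc (alphaC n₂ k₂ - radC n₂) (alphaC n₂ k₂ + radC n₂)) :
    n₁ = n₂ ∧ k₁ = k₂ := by
  rcases le_total n₁ n₂ with h | h
  · exact eq_of_mem_Icc_of_mem_Icc_of_le h hy₁ hy₂
  · obtain ⟨hn, hk⟩ := eq_of_mem_Icc_of_mem_Icc_of_le h hy₂ hy₁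
    exact ⟨hn.symm, hk.symm⟩

/-- The closed intervals `[ε·α(n,k) − r(n), ε·α(n,k) + r(n)]` for `ε ∈ {1, −1}`, `n ≥ 1`,
`0 ≤ k ≤ 2^(n−1) − 1` are pairwise disjoint. -/
theorem stmt_9 :
    ∀ ε₁ ε₂ : ℝ, (ε₁ = 1 ∨ ε₁ = -1) → (ε₂ = 1 ∨ ε₂ = -1) →
    ∀ n₁ k₁ n₂ k₂ : ℕ, 1 ≤ n₁ → k₁ < 2 ^ (n₁ - 1) → 1 ≤ n₂ → k₂ < 2 ^ (n₂ - 1) →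
    (ε₁, n₁, k₁) ≠ (ε₂, n₂, k₂) →
    Disjoint (Set.Icc (ε₁ * alphaC n₁ k₁ - radC n₁) (ε₁ * alphaC n₁ k₁ + radC n₁))
      (Set.Icc (ε₂ * alphaC n₂ k₂ - radC n₂) (ε₂ * alphaC n₂ k₂ + radC n₂)) := by
  intro ε₁ ε₂ hε₁ hε₂ n₁ k₁ n₂ k₂ _ _ _ _ hne
  rw [Set.disjoint_left]
  rintro x ⟨hx₁, hx₁'⟩ ⟨hx₂, hx₂'⟩
  have hr₁ := radC_lt_alphaC n₁ k₁
  have hr₂ := radC_lt_alphaC n₂ k₂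
  rcases hε₁ with rfl | rfl <;> rcases hε₂ with rfl | rfl
  · have hy₁ : x ∈ Set.Icc (alphaC n₁ k₁ - radC n₁) (alphaC n₁ k₁ + radC n₁) := by
      constructor <;> linarith
    have hy₂ : x ∈ Set.Icc (alphaC n₂ k₂ - radC n₂) (alphaC n₂ k₂ + radC n₂) := by
      constructor <;> linarith
    obtain ⟨rfl, rfl⟩ := eq_of_mem_Icc_of_mem_Icc hy₁ hy₂
    exact hne rfl
  · linarith
  · linarith
  · have hy₁ : -x ∈ Set.Icc (alphaC n₁ k₁ - radC n₁) (alphaC n₁ k₁ + radC n₁) := by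
      constructor <;> linarith
    have hy₂ : -x ∈ Set.Icc (alphaC n₂ k₂ - radC n₂) (alphaC n₂ k₂ + radC n₂) := by
      constructor <;> linarith
    obtain ⟨rfl, rfl⟩ := eq_of_mem_Icc_of_mem_Icc hy₁ hy₂
    exact hne rfl
end
end
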